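/- arXiv:0901.0595 — 4 statements merged into one kernel-verified Lean document; each statement's English description precedes it below -/
import Mathlib

section
/- If 0 < p < 1/2 and 0 ≤ e ≤ 2p, then D(x) = H(x*p) - (1-e)·H(x) - H(p) is monotonically decreasing on the interval [0, 1/2]. -/
open Real Set

/-- Binary entropy function (base 2). -/
noncomputable def binH (t : ℝ) : ℝ := -(t * Real.logb 2 t) - (1 - t) * Real.logb 2 (1 - t)

/-- Binary convolution x*p = x(1-p)+p(1-x). -/
def bconv (x p : ℝ) : ℝ := x * (1 - p) + p * (1 - x)

/-- D(x) = H(x*p) - (1-e) H(x) - H(p). -/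
noncomputable def Dfun (p e x : ℝ) : ℝ := binH (bconv x p) - (1 - e) * binH x - binH p

/-!
In nats, `D' x = (1 - 2p) L (x * p) - (1 - e) L x` with `L t = log (1 - t) - log t`, the derivative
of the binary entropy. On `(0, 1/2]` the function `L` is nonnegative and decreasing, and
`x ≤ x * p ≤ 1/2`, so `(1 - 2p) L (x * p) ≤ (1 - 2p) L x ≤ (1 - e) L x`.
-/

lemma binH_eq_binEntropy_div (t : ℝ) : binH t = binEntropy t / log 2 := by
  simp only [binH, binEntropy_eq_negMulLog_add_negMulLog_one_sub, negMulLog, logb]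
  ring

lemma Dfun_eq (p e x : ℝ) :
    Dfun p e x = (binEntropy (bconv x p) - (1 - e) * binEntropy x - binEntropy p) / log 2 := by
  simp only [Dfun, binH_eq_binEntropy_div]
  ring

lemma bconv_eq_affine (x p : ℝ) : bconv x p = (1 - 2 * p) * x + p := by
  unfold bconv
  ring

lemma self_le_bconv {x p : ℝ} (hp : 0 ≤ p) (hx : x ≤ 1 / 2) : x ≤ bconv x p := by
  rw [bconv_eq_affine]
  nlinarith

lemma bconv_le_half {x p : ℝ} (hp : p ≤ 1 / 2) (hx : x ≤ 1 / 2) : bconv x p ≤ 1 / 2 := by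
  rw [bconv_eq_affine]
  nlinarith

lemma log_one_sub_sub_log_nonneg {t : ℝ} (h0 : 0 < t) (h : t ≤ 1 / 2) :
    0 ≤ log (1 - t) - log t := by
  linarith [log_le_log h0 (by linarith : t ≤ 1 - t)]

lemma antitoneOn_log_one_sub_sub_log : AntitoneOn (fun t => log (1 - t) - log t) (Ioo 0 1) := by
  intro s hs t ht hst
  linarith [log_le_log (by linarith [ht.2] : 0 < 1 - t) (by linarith : 1 - t ≤ 1 - s),
    log_le_log hs.1 hst]

lemma hasDerivAt_binEntropy_bconv_sub {p e x : ℝ} (hp0 : 0 ≤ p) (hp1 : p ≤ 1 / 2)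
    (hx0 : 0 < x) (hx1 : x < 1 / 2) :
    HasDerivAt (fun x => binEntropy (bconv x p) - (1 - e) * binEntropy x)
      ((1 - 2 * p) * (log (1 - bconv x p) - log (bconv x p))
        - (1 - e) * (log (1 - x) - log x)) x := by
  have hy0 : 0 < bconv x p := hx0.trans_le (self_le_bconv hp0 hx1.le)
  have hy1 : bconv x p < 1 := by linarith [bconv_le_half hp1 hx1.le]
  have hbconv : HasDerivAt (fun x => bconv x p) (1 - 2 * p) x := by
    simp only [bconv_eq_affine]
    simpa using ((hasDerivAt_id x).const_mul (1 - 2 * p)).add_const p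
  exact (((hasDerivAt_binEntropy hy0.ne' hy1.ne).comp x hbconv).sub
    ((hasDerivAt_binEntropy hx0.ne' (by linarith)).const_mul (1 - e))).congr_deriv (by ring)

lemma antitoneOn_binEntropy_bconv_sub {p e : ℝ} (hp0 : 0 ≤ p) (hp1 : p ≤ 1 / 2)
    (he : e ≤ 2 * p) :
    AntitoneOn (fun x => binEntropy (bconv x p) - (1 - e) * binEntropy x) (Icc 0 (1 / 2)) := by
  refine antitoneOn_of_deriv_nonpos (convex_Icc _ _) (by unfold bconv; fun_prop)
    (fun x hx => ?_) (fun x hx => ?_)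
  all_goals
    rw [interior_Icc] at hx
    have hD := hasDerivAt_binEntropy_bconv_sub (e := e) hp0 hp1 hx.1 hx.2
  · exact hD.differentiableAt.differentiableWithinAt
  · rw [hD.deriv]
    have hxy := self_le_bconv hp0 hx.2.le
    have hy := bconv_le_half hp1 hx.2.le
    have hL := antitoneOn_log_one_sub_sub_log ⟨hx.1, by linarith⟩
      ⟨hx.1.trans_le hxy, by linarith⟩ hxy
    have hLx := log_one_sub_sub_log_nonneg hx.1 hx.2.le
    calc (1 - 2 * p) * (log (1 - bconv x p) - log (bconv x p)) - (1 - e) * (log (1 - x) - log x)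
        ≤ (1 - 2 * p) * (log (1 - x) - log x) - (1 - e) * (log (1 - x) - log x) := by
          gcongr
          linarith
      _ = (e - 2 * p) * (log (1 - x) - log x) := by ring
      _ ≤ 0 := mul_nonpos_of_nonpos_of_nonneg (by linarith) hLx

theorem stmt2_general (p e : ℝ) (hp0 : 0 < p) (hp1 : p < 1 / 2) (he1 : e ≤ 2 * p) :
    AntitoneOn (fun x => Dfun p e x) (Set.Icc (0 : ℝ) (1 / 2)) := by
  intro x hx y hy hxy
  simp only [Dfun_eq]
  gcongr (?_ - _) / _
  exact antitoneOn_binEntropy_bconv_sub hp0.le hp1.le he1 hx hy hxy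

/-- When e ≤ 2p, D is monotonically decreasing on [0,1/2]. -/
theorem stmt2 (p e : ℝ) (hp0 : 0 < p) (hp1 : p < 1 / 2) (he0 : 0 ≤ e) (he1 : e ≤ 2 * p) :
    AntitoneOn (fun x => Dfun p e x) (Set.Icc (0 : ℝ) (1 / 2)) :=
  stmt2_general p e hp0 hp1 he1
end

section
/- For 0 < p < 1/2 and 0 ≤ e ≤ H(p), D(x) = H(x*p) - (1-e)·H(x) - H(p) satisfies D(x) ≤ 0 for all x ∈ [0,1], i.e., the BEC(e) receiver is more capable than the BSC(p) receiver. -/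
/-!
Since `H ≥ 0`, `D` decreases in `e`, so it suffices to take `e = H(p)`. Writing `h` for the binary
entropy in nats, `D` is then `gap p x = h(x*p) - (1 - H(p)) h(x) - h(p)` up to the factor `log 2`.
This vanishes at `0`, `1/2`, `1` and is symmetric about `1/2`. Its second derivative has the sign
of `(1 - H(p)) p(1-p) - H(p) (1-2p)² x(1-x)`, so `gap p` is convex near the endpoints and concave
on a middle interval `[x₀, 1 - x₀]`. Concavity and symmetry give `gap p ≤ gap p (1/2) = 0` on the
middle interval, and convexity then gives `gap p ≤ max (gap p 0) (gap p x₀) ≤ 0` near the ends.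
-/

open Real Set

lemma binH_nonneg {t : ℝ} (ht0 : 0 ≤ t) (ht1 : t ≤ 1) : 0 ≤ binH t := by
  rw [binH_eq_binEntropy_div]
  exact div_nonneg (binEntropy_nonneg ht0 ht1) (log_pos one_lt_two).le

lemma binH_pos {t : ℝ} (ht0 : 0 < t) (ht1 : t < 1) : 0 < binH t := by
  rw [binH_eq_binEntropy_div]
  exact div_pos (binEntropy_pos ht0 ht1) (log_pos one_lt_two)

lemma binH_le_one (t : ℝ) : binH t ≤ 1 := by
  rw [binH_eq_binEntropy_div, div_le_one (log_pos one_lt_two)]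
  exact binEntropy_le_log_two

lemma bconv_mem_Ioo {x p : ℝ} (hp0 : 0 < p) (hp1 : p < 1) (hx0 : 0 ≤ x) (hx1 : x ≤ 1) :
    bconv x p ∈ Ioo 0 1 := by
  unfold bconv
  rcases le_total p (1 / 2) with h | h <;> constructor <;> nlinarith

lemma bconv_one_sub (x p : ℝ) : bconv (1 - x) p = 1 - bconv x p := by
  unfold bconv; ring

lemma bconv_mul_one_sub (x p : ℝ) :
    bconv x p * (1 - bconv x p) = p * (1 - p) + (1 - 2 * p) ^ 2 * (x * (1 - x)) := by
  unfold bconv; ring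

lemma hasDerivAt_bconv (x p : ℝ) : HasDerivAt (fun x => bconv x p) (1 - 2 * p) x := by
  have h := ((hasDerivAt_id x).mul_const (1 - p)).add
    (((hasDerivAt_const x (1 : ℝ)).sub (hasDerivAt_id x)).const_mul p)
  exact h.congr_deriv (by ring)

lemma hasDerivAt_log_one_sub_sub_log {x : ℝ} (hx0 : 0 < x) (hx1 : x < 1) :
    HasDerivAt (fun x => log (1 - x) - log x) (-(1 / (x * (1 - x)))) x := by
  have h := (((hasDerivAt_id x).const_sub 1).log (sub_ne_zero.2 hx1.ne')).sub
    ((hasDerivAt_id x).log hx0.ne')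
  refine h.congr_deriv ?_
  have : 1 - x ≠ 0 := by linarith
  simp only [id]
  field_simp
  ring

lemma nonpos_of_convexOn_of_concaveOn_of_symm {f : ℝ → ℝ} {a : ℝ} (ha : a ≤ 1 / 2)
    (hsymm : ∀ x, f (1 - x) = f x) (h0 : f 0 = 0) (hhalf : f (1 / 2) = 0)
    (hconv : ConvexOn ℝ (Icc 0 a) f) (hconc : ConcaveOn ℝ (Icc a (1 - a)) f)
    {x : ℝ} (hx : x ∈ Icc 0 1) : f x ≤ 0 := by
  have hmid : ∀ y ∈ Icc a (1 - a), f y ≤ 0 := by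
    intro y hy
    have h := hconc.2 hy (y := 1 - y) ⟨by linarith [hy.2], by linarith [hy.1]⟩
      (by norm_num : (0 : ℝ) ≤ 1 / 2) (by norm_num : (0 : ℝ) ≤ 1 / 2) (by norm_num)
    rw [show (1 / 2 : ℝ) • y + (1 / 2 : ℝ) • (1 - y) = 1 / 2 by simp only [smul_eq_mul]; ring,
      hhalf, hsymm, smul_eq_mul] at h
    linarith
  have hleft : ∀ y ∈ Icc 0 a, f y ≤ 0 := fun y hy =>
    (hconv.le_max_of_mem_Icc (left_mem_Icc.2 (hy.1.trans hy.2)) (right_mem_Icc.2 (hy.1.trans hy.2))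
      hy).trans (max_le h0.le (hmid a ⟨le_rfl, by linarith⟩))
  rcases le_or_gt x a with hxa | hax
  · exact hleft x ⟨hx.1, hxa⟩
  rcases le_or_gt x (1 - a) with hxa' | hax'
  · exact hmid x ⟨hax.le, hxa'⟩
  rw [← hsymm]
  exact hleft (1 - x) ⟨by linarith [hx.2], by linarith⟩

namespace BscBec

noncomputable def gap (p x : ℝ) : ℝ :=
  binEntropy (bconv x p) - (1 - binH p) * binEntropy x - binEntropy p

noncomputable def gapDeriv (p x : ℝ) : ℝ :=
  (1 - 2 * p) * (log (1 - bconv x p) - log (bconv x p)) - (1 - binH p) * (log (1 - x) - log x)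

noncomputable def gapDeriv2 (p x : ℝ) : ℝ :=
  (1 - binH p) / (x * (1 - x)) - (1 - 2 * p) ^ 2 / (bconv x p * (1 - bconv x p))

lemma gap_zero (p : ℝ) : gap p 0 = 0 := by
  simp [gap, bconv]

lemma gap_half (p : ℝ) : gap p (1 / 2) = 0 := by
  have h : bconv (1 / 2) p = 2⁻¹ := by unfold bconv; ring
  rw [gap, h, one_div, binEntropy_two_inv, binH_eq_binEntropy_div]
  field_simp
  ring

lemma gap_one_sub (p x : ℝ) : gap p (1 - x) = gap p x := by
  rw [gap, gap, bconv_one_sub, binEntropy_one_sub, binEntropy_one_sub]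

lemma continuous_gap (p : ℝ) : Continuous (gap p) := by
  unfold gap bconv
  fun_prop

lemma hasDerivAt_gap {p x : ℝ} (hp0 : 0 < p) (hp1 : p < 1) (hx0 : 0 < x) (hx1 : x < 1) :
    HasDerivAt (gap p) (gapDeriv p x) x := by
  obtain ⟨hy0, hy1⟩ := bconv_mem_Ioo hp0 hp1 hx0.le hx1.le
  have hy := (hasDerivAt_binEntropy hy0.ne' hy1.ne).comp x (hasDerivAt_bconv x p)
  have h := (hy.sub ((hasDerivAt_binEntropy hx0.ne' hx1.ne).const_mul (1 - binH p))).sub_const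
    (binEntropy p)
  exact h.congr_deriv (by unfold gapDeriv; ring)

lemma hasDerivAt_gapDeriv {p x : ℝ} (hp0 : 0 < p) (hp1 : p < 1) (hx0 : 0 < x) (hx1 : x < 1) :
    HasDerivAt (gapDeriv p) (gapDeriv2 p x) x := by
  obtain ⟨hy0, hy1⟩ := bconv_mem_Ioo hp0 hp1 hx0.le hx1.le
  have hy := (hasDerivAt_log_one_sub_sub_log hy0 hy1).comp x (hasDerivAt_bconv x p)
  have h := (hy.const_mul (1 - 2 * p)).sub
    ((hasDerivAt_log_one_sub_sub_log hx0 hx1).const_mul (1 - binH p))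
  exact h.congr_deriv (by unfold gapDeriv2; ring)

noncomputable def threshold (p : ℝ) : ℝ :=
  (1 - binH p) * (p * (1 - p)) / (binH p * (1 - 2 * p) ^ 2)

lemma gapDeriv2_eq {p x : ℝ} (hp0 : 0 < p) (hp1 : p < 1) (hx0 : 0 < x) (hx1 : x < 1) :
    gapDeriv2 p x = ((1 - binH p) * (p * (1 - p)) - binH p * (1 - 2 * p) ^ 2 * (x * (1 - x)))
      / (x * (1 - x) * (bconv x p * (1 - bconv x p))) := by
  obtain ⟨hy0, hy1⟩ := bconv_mem_Ioo hp0 hp1 hx0.le hx1.le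
  rw [gapDeriv2, div_sub_div _ _ (by nlinarith) (by nlinarith)]
  congr 1
  rw [bconv_mul_one_sub]
  ring

lemma gapDeriv2_nonneg {p x : ℝ} (hp0 : 0 < p) (hp1 : p < 1 / 2) (hx0 : 0 < x) (hx1 : x < 1)
    (h : x * (1 - x) ≤ threshold p) : 0 ≤ gapDeriv2 p x := by
  obtain ⟨hy0, hy1⟩ := bconv_mem_Ioo hp0 (by linarith) hx0.le hx1.le
  have hc : 0 < binH p * (1 - 2 * p) ^ 2 :=
    mul_pos (binH_pos hp0 (by linarith)) (by nlinarith)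
  rw [threshold, le_div_iff₀ hc] at h
  rw [gapDeriv2_eq hp0 (by linarith) hx0 hx1]
  exact div_nonneg (by linarith) (by positivity)

lemma gapDeriv2_nonpos {p x : ℝ} (hp0 : 0 < p) (hp1 : p < 1 / 2) (hx0 : 0 < x) (hx1 : x < 1)
    (h : threshold p ≤ x * (1 - x)) : gapDeriv2 p x ≤ 0 := by
  obtain ⟨hy0, hy1⟩ := bconv_mem_Ioo hp0 (by linarith) hx0.le hx1.le
  have hc : 0 < binH p * (1 - 2 * p) ^ 2 :=
    mul_pos (binH_pos hp0 (by linarith)) (by nlinarith)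
  rw [threshold, div_le_iff₀ hc] at h
  rw [gapDeriv2_eq hp0 (by linarith) hx0 hx1]
  exact div_nonpos_of_nonpos_of_nonneg (by linarith) (by positivity)

lemma convexOn_gap {p a b : ℝ} (hp0 : 0 < p) (hp1 : p < 1 / 2) (ha : 0 ≤ a) (hb : b ≤ 1)
    (h : ∀ x ∈ Ioo a b, x * (1 - x) ≤ threshold p) : ConvexOn ℝ (Icc a b) (gap p) := by
  refine convexOn_of_hasDerivWithinAt2_nonneg (convex_Icc a b) (continuous_gap p).continuousOn
    (f' := gapDeriv p) (f'' := gapDeriv2 p) ?_ ?_ ?_ <;> intro x hx <;> rw [interior_Icc] at hx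
  · exact (hasDerivAt_gap hp0 (by linarith) (ha.trans_lt hx.1) (hx.2.trans_le hb)).hasDerivWithinAt
  · exact (hasDerivAt_gapDeriv hp0 (by linarith) (ha.trans_lt hx.1)
      (hx.2.trans_le hb)).hasDerivWithinAt
  · exact gapDeriv2_nonneg hp0 hp1 (ha.trans_lt hx.1) (hx.2.trans_le hb) (h x hx)

lemma concaveOn_gap {p a b : ℝ} (hp0 : 0 < p) (hp1 : p < 1 / 2) (ha : 0 ≤ a) (hb : b ≤ 1)
    (h : ∀ x ∈ Ioo a b, threshold p ≤ x * (1 - x)) : ConcaveOn ℝ (Icc a b) (gap p) := by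
  refine concaveOn_of_hasDerivWithinAt2_nonpos (convex_Icc a b) (continuous_gap p).continuousOn
    (f' := gapDeriv p) (f'' := gapDeriv2 p) ?_ ?_ ?_ <;> intro x hx <;> rw [interior_Icc] at hx
  · exact (hasDerivAt_gap hp0 (by linarith) (ha.trans_lt hx.1) (hx.2.trans_le hb)).hasDerivWithinAt
  · exact (hasDerivAt_gapDeriv hp0 (by linarith) (ha.trans_lt hx.1)
      (hx.2.trans_le hb)).hasDerivWithinAt
  · exact gapDeriv2_nonpos hp0 hp1 (ha.trans_lt hx.1) (hx.2.trans_le hb) (h x hx)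

lemma threshold_nonneg {p : ℝ} (hp0 : 0 ≤ p) (hp1 : p ≤ 1) : 0 ≤ threshold p :=
  div_nonneg (mul_nonneg (by linarith [binH_le_one p]) (by nlinarith))
    (mul_nonneg (binH_nonneg hp0 hp1) (sq_nonneg _))

/-- The `x₀` of the header. When `threshold p > 1/4` the square root is junk `0`, so `x₀ = 1/2`
and `gap p` is convex on all of `[0, 1/2]`. -/
noncomputable def inflection (p : ℝ) : ℝ := (1 - √(1 - 4 * threshold p)) / 2

lemma inflection_le_half (p : ℝ) : inflection p ≤ 1 / 2 := by
  unfold inflection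
  linarith [sqrt_nonneg (1 - 4 * threshold p)]

lemma inflection_nonneg {p : ℝ} (hp0 : 0 ≤ p) (hp1 : p ≤ 1) : 0 ≤ inflection p := by
  have : √(1 - 4 * threshold p) ≤ 1 := sqrt_le_one.2 (by linarith [threshold_nonneg hp0 hp1])
  unfold inflection
  linarith

lemma inflection_mul_one_sub (p : ℝ) :
    inflection p * (1 - inflection p) = min (threshold p) (1 / 4) := by
  have hs := sq_sqrt' (x := 1 - 4 * threshold p)
  unfold inflection
  rcases le_total (threshold p) (1 / 4) with h | h
  · rw [max_eq_left (by linarith)] at hs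
    rw [min_eq_left h]
    linear_combination (-1 / 4 : ℝ) * hs
  · rw [max_eq_right (by linarith)] at hs
    rw [min_eq_right h]
    linear_combination (-1 / 4 : ℝ) * hs

lemma mul_one_sub_le_threshold {p x : ℝ} (hx : x ≤ inflection p) : x * (1 - x) ≤ threshold p := by
  have h := inflection_mul_one_sub p
  nlinarith [inflection_le_half p, min_le_left (threshold p) (1 / 4)]

lemma threshold_le_mul_one_sub {p x : ℝ} (hx : x ∈ Ioo (inflection p) (1 - inflection p)) :
    threshold p ≤ x * (1 - x) := by
  have hlt : min (threshold p) (1 / 4) < x * (1 - x) := by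
    rw [← inflection_mul_one_sub]
    nlinarith [hx.1, hx.2]
  rcases min_lt_iff.1 hlt with h | h
  · exact h.le
  · nlinarith [sq_nonneg (x - 1 / 2)]

lemma gap_nonpos {p x : ℝ} (hp0 : 0 < p) (hp1 : p < 1 / 2) (hx : x ∈ Icc 0 1) : gap p x ≤ 0 :=
  have h0 := inflection_nonneg hp0.le (by linarith : p ≤ 1)
  have h1 := inflection_le_half p
  nonpos_of_convexOn_of_concaveOn_of_symm h1 (gap_one_sub p) (gap_zero p) (gap_half p)
    (convexOn_gap hp0 hp1 le_rfl (by linarith) fun _ hy => mul_one_sub_le_threshold hy.2.le)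
    (concaveOn_gap hp0 hp1 h0 (by linarith) fun _ hy => threshold_le_mul_one_sub hy) hx

end BscBec

lemma Dfun_eq_gap_div_log_two_sub (p e x : ℝ) :
    Dfun p e x = BscBec.gap p x / log 2 - (binH p - e) * binH x := by
  simp only [Dfun, BscBec.gap, binH_eq_binEntropy_div]
  field_simp
  ring

theorem stmt5_general (p e : ℝ) (hp0 : 0 < p) (hp1 : p < 1 / 2) (he1 : e ≤ binH p) :
    ∀ x ∈ Set.Icc (0 : ℝ) 1, Dfun p e x ≤ 0 := by
  intro x hx
  have hgap : BscBec.gap p x / log 2 ≤ 0 :=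
    div_nonpos_of_nonpos_of_nonneg (BscBec.gap_nonpos hp0 hp1 hx) (log_pos one_lt_two).le
  have hmono : 0 ≤ (binH p - e) * binH x := mul_nonneg (sub_nonneg.2 he1) (binH_nonneg hx.1 hx.2)
  rw [Dfun_eq_gap_div_log_two_sub]
  linarith

/-- When e ≤ H(p), D(x) ≤ 0 for all x ∈ [0,1], i.e. BEC(e) is more capable than BSC(p). -/
theorem stmt5 (p e : ℝ) (hp0 : 0 < p) (hp1 : p < 1 / 2) (he0 : 0 ≤ e) (he1 : e ≤ binH p) :
    ∀ x ∈ Set.Icc (0 : ℝ) 1, Dfun p e x ≤ 0 :=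
  stmt5_general p e hp0 hp1 he1
end

section
/- For 0 < p < 1/2 and 2p < e < 1, the equation (( (1-x)/x )^c + 1)^{-1} = x(1-p) + p(1-x), where c = (1-e)/(1-2p) ∈ (0,1), has at most one solution x in the open interval (0, 1/2). -/
open Real Set

/-!
Taking logarithms, the equation says `logOdds (p ⋆ x) = c * logOdds x`, where
`logOdds x = log ((1 - x) / x)` and `p ⋆ x` is the binary convolution. It therefore suffices that
the ratio `logOdds (p ⋆ x) / logOdds x` is strictly increasing on `(0, 1/2)`. Its derivative has
the sign of `V * R (1 - R) - (1 - 2p) U * x (1 - x)` with `U = logOdds x`, `R = p ⋆ x`,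
`V = logOdds R`. Since `sinh (logOdds x) = (1 - 2x) / (2 x (1 - x))` and
`1 - 2R = (1 - 2p)(1 - 2x)`, this sign condition becomes `sinh V / V < sinh U / U`, which holds
because `0 < V < U` and `sinh` is strictly convex on `[0, ∞)` with `sinh 0 = 0`.
-/

noncomputable def logOdds (x : ℝ) : ℝ := log ((1 - x) / x)

/-- The binary convolution `p ⋆ x`: the probability of reading `1` when a bit equal to `1` with
probability `x` is flipped with probability `p`. -/
def binConv (p x : ℝ) : ℝ := x * (1 - p) + p * (1 - x)

theorem strictConvexOn_sinh : StrictConvexOn ℝ (Ici 0) sinh :=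
  StrictMonoOn.strictConvexOn_of_deriv (convex_Ici 0) continuous_sinh.continuousOn
    (by rw [Real.deriv_sinh]; exact cosh_strictMonoOn.mono interior_subset)

theorem sinh_div_self_lt {u v : ℝ} (hv : 0 < v) (hvu : v < u) : sinh v / v < sinh u / u := by
  simpa using strictConvexOn_sinh.secant_strict_mono (a := 0) (mem_Ici.2 le_rfl) hv.le
    (hv.trans hvu).le hv.ne' (hv.trans hvu).ne' hvu

section logOdds

variable {x : ℝ}

theorem logOdds_pos (hx0 : 0 < x) (hx : x < 1 / 2) : 0 < logOdds x :=
  log_pos ((one_lt_div hx0).2 (by linarith))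

theorem logOdds_lt_logOdds {y : ℝ} (hx0 : 0 < x) (hxy : x < y) (hy1 : y < 1) :
    logOdds y < logOdds x := by
  have hy0 : 0 < y := hx0.trans hxy
  refine log_lt_log (div_pos (by linarith) hy0) ?_
  rw [div_lt_div_iff₀ hy0 hx0]
  nlinarith

theorem logOdds_inv_add_one {a : ℝ} (ha : 0 < a) : logOdds (a + 1)⁻¹ = log a := by
  rw [logOdds]
  congr 1
  field_simp
  ring

theorem sinh_logOdds (hx0 : 0 < x) (hx1 : x < 1) :
    sinh (logOdds x) = (1 - 2 * x) / (2 * (x * (1 - x))) := by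
  have : 0 < 1 - x := by linarith
  rw [logOdds, sinh_log (by positivity)]
  field_simp
  ring

theorem hasDerivAt_logOdds (hx0 : 0 < x) (hx1 : x < 1) :
    HasDerivAt logOdds (-(x * (1 - x))⁻¹) x := by
  have h1x : 1 - x ≠ 0 := by linarith
  have hquot : HasDerivAt (fun y => (1 - y) / y) ((-1 * x - (1 - x) * 1) / x ^ 2) x :=
    ((hasDerivAt_id' x).const_sub 1).div (hasDerivAt_id' x) hx0.ne'
  refine (hquot.log (div_ne_zero h1x hx0.ne')).congr_deriv ?_
  field_simp
  ring

end logOdds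

section binConv

variable {p x : ℝ}

theorem hasDerivAt_binConv : HasDerivAt (binConv p) (1 - 2 * p) x := by
  have := ((hasDerivAt_id' x).mul_const (1 - p)).add (((hasDerivAt_id' x).const_sub 1).const_mul p)
  exact this.congr_deriv (by ring)

theorem one_sub_two_mul_binConv : 1 - 2 * binConv p x = (1 - 2 * p) * (1 - 2 * x) := by
  rw [binConv]; ring

theorem binConv_mem_Ioo (hp0 : 0 < p) (hp1 : p < 1 / 2) (hx : x < 1 / 2) :
    binConv p x ∈ Ioo x (1 / 2) := by
  constructor <;> rw [binConv] <;> nlinarith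

end binConv

section ratio

variable {p x : ℝ}

theorem one_sub_two_mul_logOdds_mul_lt_logOdds_binConv_mul (hp0 : 0 < p) (hp1 : p < 1 / 2)
    (hx0 : 0 < x) (hx : x < 1 / 2) :
    (1 - 2 * p) * logOdds x * (x * (1 - x)) <
      logOdds (binConv p x) * (binConv p x * (1 - binConv p x)) := by
  obtain ⟨hxR, hR⟩ := binConv_mem_Ioo hp0 hp1 hx
  have hR0 : 0 < binConv p x := hx0.trans hxR
  have hV := logOdds_pos hR0 hR
  have hU := logOdds_pos hx0 hx
  have hs : 0 < x * (1 - x) := by nlinarith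
  have hr : 0 < binConv p x * (1 - binConv p x) := by nlinarith
  have key := sinh_div_self_lt hV (logOdds_lt_logOdds hx0 hxR (by linarith))
  rw [sinh_logOdds hR0 (by linarith), sinh_logOdds hx0 (by linarith), one_sub_two_mul_binConv,
    div_div, div_div, div_lt_div_iff₀ (by positivity) (by positivity)] at key
  have h12x : 0 < 1 - 2 * x := by linarith
  refine lt_of_mul_lt_mul_left ?_ (by positivity : 0 ≤ 2 * (1 - 2 * x))
  linear_combination key

theorem hasDerivAt_logOdds_binConv_div_logOdds (hp0 : 0 < p) (hp1 : p < 1 / 2) (hx0 : 0 < x)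
    (hx : x < 1 / 2) :
    HasDerivAt (fun y => logOdds (binConv p y) / logOdds y)
      ((logOdds (binConv p x) / (x * (1 - x)) -
        (1 - 2 * p) * logOdds x / (binConv p x * (1 - binConv p x))) / logOdds x ^ 2) x := by
  obtain ⟨hxR, hR⟩ := binConv_mem_Ioo hp0 hp1 hx
  refine (((hasDerivAt_logOdds (hx0.trans hxR) (by linarith)).comp x hasDerivAt_binConv).div
    (hasDerivAt_logOdds hx0 (by linarith)) (logOdds_pos hx0 hx).ne').congr_deriv ?_
  simp only [Function.comp_apply, div_eq_mul_inv]
  ring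

theorem strictMonoOn_logOdds_binConv_div_logOdds (hp0 : 0 < p) (hp1 : p < 1 / 2) :
    StrictMonoOn (fun x => logOdds (binConv p x) / logOdds x) (Ioo 0 (1 / 2)) := by
  refine strictMonoOn_of_deriv_pos (convex_Ioo 0 (1 / 2)) (fun x ⟨hx0, hx⟩ =>
    (hasDerivAt_logOdds_binConv_div_logOdds hp0 hp1 hx0 hx).continuousAt.continuousWithinAt)
    fun x hx => ?_
  rw [interior_Ioo] at hx
  obtain ⟨hx0, hx⟩ := hx
  obtain ⟨hxR, hR⟩ := binConv_mem_Ioo hp0 hp1 hx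
  rw [(hasDerivAt_logOdds_binConv_div_logOdds hp0 hp1 hx0 hx).deriv]
  have hs : 0 < x * (1 - x) := by nlinarith
  have hr : 0 < binConv p x * (1 - binConv p x) := by nlinarith
  have hnum := one_sub_two_mul_logOdds_mul_lt_logOdds_binConv_mul hp0 hp1 hx0 hx
  exact div_pos (sub_pos.2 ((div_lt_div_iff₀ hr hs).2 hnum)) (pow_pos (logOdds_pos hx0 hx) 2)

theorem logOdds_binConv_div_logOdds_eq {c : ℝ} (hx0 : 0 < x) (hx : x < 1 / 2)
    (h : (((1 - x) / x) ^ c + 1)⁻¹ = binConv p x) :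
    logOdds (binConv p x) / logOdds x = c := by
  have hodds : 0 < (1 - x) / x := div_pos (by linarith) hx0
  rw [← h, logOdds_inv_add_one (rpow_pos_of_pos hodds c), log_rpow hodds, ← logOdds,
    mul_div_cancel_right₀ _ (logOdds_pos hx0 hx).ne']

end ratio

theorem stmt7_general (p e : ℝ) (hp0 : 0 < p) (hp1 : p < 1 / 2) :
    ∀ x ∈ Set.Ioo (0 : ℝ) (1 / 2), ∀ y ∈ Set.Ioo (0 : ℝ) (1 / 2),
      (((1 - x) / x) ^ ((1 - e) / (1 - 2 * p)) + 1)⁻¹ = x * (1 - p) + p * (1 - x) →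
      (((1 - y) / y) ^ ((1 - e) / (1 - 2 * p)) + 1)⁻¹ = y * (1 - p) + p * (1 - y) →
      x = y := by
  intro x hx y hy hEx hEy
  exact (strictMonoOn_logOdds_binConv_div_logOdds hp0 hp1).injOn hx hy <|
    (logOdds_binConv_div_logOdds_eq hx.1 hx.2 hEx).trans
      (logOdds_binConv_div_logOdds_eq hy.1 hy.2 hEy).symm

/-- For c = (1-e)/(1-2p) ∈ (0,1), the equation (((1-x)/x)^c + 1)⁻¹ = x(1-p)+p(1-x)
has at most one solution in (0,1/2). -/
theorem stmt7 (p e : ℝ) (hp0 : 0 < p) (hp1 : p < 1 / 2) (he0 : 2 * p < e) (he1 : e < 1) :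
    ∀ x ∈ Set.Ioo (0 : ℝ) (1 / 2), ∀ y ∈ Set.Ioo (0 : ℝ) (1 / 2),
      (((1 - x) / x) ^ ((1 - e) / (1 - 2 * p)) + 1)⁻¹ = x * (1 - p) + p * (1 - x) →
      (((1 - y) / y) ^ ((1 - e) / (1 - 2 * p)) + 1)⁻¹ = y * (1 - p) + p * (1 - y) →
      x = y :=
  stmt7_general p e hp0 hp1
end

section
/- For 0 < c < 1, the function L(x) = (((1-x)/x)^c + 1)^{-1} is concave on the interval (0, 1/2]. -/
/-!
Writing `L x = x ^ c / (x ^ c + (1 - x) ^ c)`, the quotient rule gives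
`L' x = c * (x * (1 - x)) ^ (c - 1) / (x ^ c + (1 - x) ^ c) ^ 2`. On `(0, 1/2]` the factor
`x * (1 - x)` increases, so its power with exponent `c - 1 ≤ 0` decreases; and the denominator
increases, since the derivative `c * (x ^ (c - 1) - (1 - x) ^ (c - 1))` of `x ^ c + (1 - x) ^ c`
is nonnegative when `x ≤ 1 - x`. Hence `L'` is antitone and `L` is concave.
-/

open Real Set

section

variable {c : ℝ}

lemma inv_div_rpow_add_one_eq {x : ℝ} (hx0 : 0 < x) (hx1 : x ≤ 1) :
    (((1 - x) / x) ^ c + 1)⁻¹ = x ^ c / (x ^ c + (1 - x) ^ c) := by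
  rw [div_rpow (by linarith) hx0.le]
  field_simp
  ring

lemma hasDerivAt_rpow_add_rpow_one_sub {x : ℝ} (hx0 : 0 < x) (hx1 : x < 1) :
    HasDerivAt (fun x : ℝ => x ^ c + (1 - x) ^ c) (c * x ^ (c - 1) - c * (1 - x) ^ (c - 1)) x := by
  refine ((hasDerivAt_rpow_const (Or.inl hx0.ne')).add
    (((hasDerivAt_id' x).const_sub 1).rpow_const
      (Or.inl (sub_pos.2 hx1).ne'))).congr_deriv ?_
  ring

lemma hasDerivAt_rpow_div_rpow_add_rpow_one_sub {x : ℝ} (hx0 : 0 < x) (hx1 : x < 1) :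
    HasDerivAt (fun x : ℝ => x ^ c / (x ^ c + (1 - x) ^ c))
      (c * (x * (1 - x)) ^ (c - 1) / (x ^ c + (1 - x) ^ c) ^ 2) x := by
  have hx1' : 0 < 1 - x := sub_pos.2 hx1
  have hS : 0 < x ^ c + (1 - x) ^ c := by positivity
  refine ((hasDerivAt_rpow_const (Or.inl hx0.ne')).fun_div
    (hasDerivAt_rpow_add_rpow_one_sub hx0 hx1) hS.ne').congr_deriv ?_
  rw [mul_rpow hx0.le hx1'.le, rpow_sub_one hx0.ne', rpow_sub_one hx1'.ne']
  field_simp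
  ring

lemma monotoneOn_rpow_add_rpow_one_sub (hc0 : 0 ≤ c) (hc1 : c ≤ 1) :
    MonotoneOn (fun x : ℝ => x ^ c + (1 - x) ^ c) (Ioc 0 (1 / 2)) := by
  refine monotoneOn_of_hasDerivWithinAt_nonneg
    (f' := fun x => c * x ^ (c - 1) - c * (1 - x) ^ (c - 1)) (convex_Ioc 0 (1 / 2))
    (fun x hx => (hasDerivAt_rpow_add_rpow_one_sub hx.1
      (by linarith [hx.2])).continuousAt.continuousWithinAt)
    (fun x hx => ?_) (fun x hx => ?_) <;> rw [interior_Ioc] at hx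
  · exact (hasDerivAt_rpow_add_rpow_one_sub hx.1 (by linarith [hx.2])).hasDerivWithinAt
  · have hpow : (1 - x) ^ (c - 1) ≤ x ^ (c - 1) :=
      rpow_le_rpow_of_nonpos hx.1 (by linarith [hx.2]) (by linarith)
    exact sub_nonneg.2 (mul_le_mul_of_nonneg_left hpow hc0)

theorem concaveOn_rpow_div_rpow_add_rpow_one_sub (hc0 : 0 ≤ c) (hc1 : c ≤ 1) :
    ConcaveOn ℝ (Ioc 0 (1 / 2)) (fun x : ℝ => x ^ c / (x ^ c + (1 - x) ^ c)) := by
  have hderiv : ∀ x ∈ Ioc (0 : ℝ) (1 / 2), HasDerivAt (fun x : ℝ => x ^ c / (x ^ c + (1 - x) ^ c))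
      (c * (x * (1 - x)) ^ (c - 1) / (x ^ c + (1 - x) ^ c) ^ 2) x :=
    fun x hx => hasDerivAt_rpow_div_rpow_add_rpow_one_sub hx.1 (by linarith [hx.2])
  have hanti : AntitoneOn (fun x : ℝ => c * (x * (1 - x)) ^ (c - 1) / (x ^ c + (1 - x) ^ c) ^ 2)
      (Ioc 0 (1 / 2)) := by
    intro x hx y hy hxy
    have hprod : x * (1 - x) ≤ y * (1 - y) := by nlinarith [hx.2, hy.2]
    have hS := monotoneOn_rpow_add_rpow_one_sub hc0 hc1 hx hy hxy
    have hprod_pos : 0 < x * (1 - x) := mul_pos hx.1 (by linarith [hx.2])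
    have hS_pos : 0 < x ^ c + (1 - x) ^ c :=
      add_pos_of_pos_of_nonneg (rpow_pos_of_pos hx.1 c) (rpow_nonneg (by linarith [hx.2]) c)
    dsimp only at hS ⊢
    gcongr c * ?_ / ?_ ^ 2
    exact rpow_le_rpow_of_nonpos hprod_pos hprod (by linarith)
  refine AntitoneOn.concaveOn_of_deriv (convex_Ioc 0 (1 / 2))
    (fun x hx => (hderiv x hx).continuousAt.continuousWithinAt)
    (fun x hx => (hderiv x (interior_subset hx)).differentiableAt.differentiableWithinAt)
    ((hanti.mono interior_subset).congr fun x hx => (hderiv x (interior_subset hx)).deriv.symm)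

end

/-- For 0 < c < 1, L(x) = (((1-x)/x)^c + 1)⁻¹ is concave on (0,1/2]. -/
theorem stmt8 (c : ℝ) (hc0 : 0 < c) (hc1 : c < 1) :
    ConcaveOn ℝ (Set.Ioc (0 : ℝ) (1 / 2))
      (fun x : ℝ => (((1 - x) / x) ^ c + 1)⁻¹) :=
  (concaveOn_rpow_div_rpow_add_rpow_one_sub hc0.le hc1.le).congr fun x hx =>
    (inv_div_rpow_add_one_eq hx.1 (by linarith [hx.2])).symm
end
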